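/- arXiv:1212.3293 — 5 statements merged into one kernel-verified Lean document; each statement's English description precedes it below -/
import Mathlib

section
/- A function f : [0,1]^n → ℝ is a nondecreasing multilinear polynomial function if and only if for every x ∈ [0,1]^n and every k, f(x) = x_k · max(f(x_k^1), f(x_k^0)) + (1 − x_k) · min(f(x_k^1), f(x_k^0)). -/
open Finset

private lemma prod_update_key (n : ℕ) (x : Fin n → ℝ) (k : Fin n) (S : Finset (Fin n)) :
    x k * ∏ i ∈ S, Function.update x k 1 i + (1 - x k) * ∏ i ∈ S, Function.update x k 0 i
      = ∏ i ∈ S, x i := by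
  by_cases hk : k ∈ S
  · rw [Finset.prod_update_of_mem hk, Finset.prod_update_of_mem hk,
      ← Finset.mul_prod_erase S x hk, Finset.sdiff_singleton_eq_erase]
    ring
  · rw [Finset.prod_update_of_notMem hk, Finset.prod_update_of_notMem hk]
    ring

private lemma cube_update {n : ℕ} {x : Fin n → ℝ} (hx : ∀ i, x i ∈ Set.Icc (0:ℝ) 1)
    (k : Fin n) {b : ℝ} (hb : b ∈ Set.Icc (0:ℝ) 1) :
    ∀ i, Function.update x k b i ∈ Set.Icc (0:ℝ) 1 := by
  intro i
  rw [Function.update_apply]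
  split
  · exact hb
  · exact hx i

theorem nondecreasing_multilinear_iff_decomp (n : ℕ) (f : (Fin n → ℝ) → ℝ) :
    ((∃ a : Finset (Fin n) → ℝ,
        ∀ x : Fin n → ℝ, (∀ i, x i ∈ Set.Icc (0:ℝ) 1) →
          f x = ∑ S : Finset (Fin n), a S * ∏ i ∈ S, x i) ∧
      (∀ x y : Fin n → ℝ, (∀ i, x i ∈ Set.Icc (0:ℝ) 1) → (∀ i, y i ∈ Set.Icc (0:ℝ) 1) →
        x ≤ y → f x ≤ f y)) ↔
      (∀ x : Fin n → ℝ, (∀ i, x i ∈ Set.Icc (0:ℝ) 1) → ∀ k : Fin n,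
        f x = x k * max (f (Function.update x k 1)) (f (Function.update x k 0)) +
          (1 - x k) * min (f (Function.update x k 1)) (f (Function.update x k 0))) := by
  classical
  have h01 : (0:ℝ) ∈ Set.Icc (0:ℝ) 1 := by norm_num
  have h11 : (1:ℝ) ∈ Set.Icc (0:ℝ) 1 := by norm_num
  constructor
  · rintro ⟨⟨a, ha⟩, hmono⟩ x hx k
    have hc1 := cube_update hx k h11
    have hc0 := cube_update hx k h01
    have hle : f (Function.update x k 0) ≤ f (Function.update x k 1) := by
      apply hmono _ _ hc0 hc1
      intro i
      rw [Function.update_apply, Function.update_apply]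
      split
      · norm_num
      · exact le_refl _
    rw [max_eq_left hle, min_eq_right hle, ha x hx, ha _ hc1, ha _ hc0,
      Finset.mul_sum, Finset.mul_sum, ← Finset.sum_add_distrib]
    refine Finset.sum_congr rfl fun S _ => ?_
    rw [← prod_update_key n x k S]
    ring
  · intro h
    -- f(x^0) ≤ f(x^1)
    have h0 : ∀ z : Fin n → ℝ, (∀ i, z i ∈ Set.Icc (0:ℝ) 1) → ∀ k : Fin n,
        f (Function.update z k 0) ≤ f (Function.update z k 1) := by
      intro z hz k
      have hz0 := cube_update hz k h01
      have := h (Function.update z k 0) hz0 k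
      simp only [Function.update_idem, Function.update_self] at this
      rw [this]
      calc (0:ℝ) * max (f (Function.update z k 1)) (f (Function.update z k 0)) +
            (1 - 0) * min (f (Function.update z k 1)) (f (Function.update z k 0))
          = min (f (Function.update z k 1)) (f (Function.update z k 0)) := by ring
        _ ≤ f (Function.update z k 1) := min_le_left _ _
    -- affine identity
    have haff : ∀ x : Fin n → ℝ, (∀ i, x i ∈ Set.Icc (0:ℝ) 1) → ∀ k : Fin n,
        f x = x k * f (Function.update x k 1) + (1 - x k) * f (Function.update x k 0) := by
      intro x hx k
      have hle := h0 x hx k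
      rw [h x hx k, max_eq_left hle, min_eq_right hle]
    -- single coordinate monotonicity
    have hstep : ∀ z : Fin n → ℝ, (∀ i, z i ∈ Set.Icc (0:ℝ) 1) → ∀ k : Fin n, ∀ b : ℝ,
        z k ≤ b → b ≤ 1 → f z ≤ f (Function.update z k b) := by
      intro z hz k b hzb hb1
      have hbmem : b ∈ Set.Icc (0:ℝ) 1 := ⟨le_trans (hz k).1 hzb, hb1⟩
      have hzb' := cube_update hz k hbmem
      have h1 := haff z hz k
      have h2 := haff (Function.update z k b) hzb' k
      simp only [Function.update_idem, Function.update_self] at h2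
      have hle := h0 z hz k
      have key : 0 ≤ (b - z k) * (f (Function.update z k 1) - f (Function.update z k 0)) :=
        mul_nonneg (by linarith) (by linarith)
      nlinarith [key, h1, h2]
    -- full monotonicity
    have hmono : ∀ x y : Fin n → ℝ, (∀ i, x i ∈ Set.Icc (0:ℝ) 1) →
        (∀ i, y i ∈ Set.Icc (0:ℝ) 1) → x ≤ y → f x ≤ f y := by
      intro x y hx hy hxy
      have claim : ∀ K : Finset (Fin n), f x ≤ f (fun i => if i ∈ K then y i else x i) := by
        intro K
        induction K using Finset.induction_on with
        | empty => simp
        | @insert a s ha ih =>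
          have hws : ∀ i, (fun i => if i ∈ s then y i else x i) i ∈ Set.Icc (0:ℝ) 1 := by
            intro i; dsimp only; split
            · exact hy i
            · exact hx i
          have heq : (fun i => if i ∈ insert a s then y i else x i) =
              Function.update (fun i => if i ∈ s then y i else x i) a (y a) := by
            funext i
            rw [Function.update_apply]
            by_cases hia : i = a
            · subst hia; simp [ha]
            · simp [hia, Finset.mem_insert]
          rw [heq]
          refine le_trans ih (hstep _ hws a (y a) ?_ (hy a).2)
          simp only [ha, if_neg ha]
          exact hxy a
      have := claim Finset.univ
      simpa using this
    -- existence of coefficients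
    have claim : ∀ K : Finset (Fin n), ∃ c : Finset (Fin n) → (Fin n → ℝ) → ℝ,
        (∀ S : Finset (Fin n), ∀ x x' : Fin n → ℝ, (∀ i, i ∉ K → x i = x' i) → c S x = c S x') ∧
        (∀ x : Fin n → ℝ, (∀ i, x i ∈ Set.Icc (0:ℝ) 1) →
          f x = ∑ S ∈ K.powerset, (∏ i ∈ S, x i) * c S x) := by
      intro K
      induction K using Finset.induction_on with
      | empty =>
        refine ⟨fun _ x => f x, ?_, ?_⟩
        · intro S x x' hxx'
          have : x = x' := funext fun i => hxx' i (Finset.notMem_empty i)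
          rw [this]
        · intro x hx
          simp
      | @insert k K hk ih =>
        obtain ⟨c, hc1, hc2⟩ := ih
        refine ⟨fun S x => if k ∈ S then
            c (S.erase k) (Function.update x k 1) - c (S.erase k) (Function.update x k 0)
          else c S (Function.update x k 0), ?_, ?_⟩
        · intro S x x' hxx'
          have hupd : ∀ b : ℝ, ∀ i, i ∉ K → Function.update x k b i = Function.update x' k b i := by
            intro b i hi
            rw [Function.update_apply, Function.update_apply]
            split
            · rfl
            · next hik => exact hxx' i (by simp [hi, hik])
          dsimp only
          split
          · rw [hc1 _ _ _ (hupd 1), hc1 _ _ _ (hupd 0)]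
          · rw [hc1 _ _ _ (hupd 0)]
        · intro x hx
          rw [Finset.sum_powerset_insert hk]
          have key := haff x hx k
          rw [hc2 (Function.update x k 1) (cube_update hx k h11),
            hc2 (Function.update x k 0) (cube_update hx k h01)] at key
          rw [key, Finset.mul_sum, Finset.mul_sum, ← Finset.sum_add_distrib,
            ← Finset.sum_add_distrib]
          refine Finset.sum_congr rfl fun S hS => ?_
          have hSK : S ⊆ K := Finset.mem_powerset.1 hS
          have hkS : k ∉ S := fun hmem => hk (hSK hmem)
          dsimp only
          rw [if_neg hkS, if_pos (Finset.mem_insert_self k S), Finset.erase_insert hkS,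
            Finset.prod_insert hkS, Finset.prod_update_of_notMem hkS,
            Finset.prod_update_of_notMem hkS]
          ring
    obtain ⟨c, hc1, hc2⟩ := claim Finset.univ
    refine ⟨⟨fun S => c S (fun _ => 0), ?_⟩, hmono⟩
    intro x hx
    rw [hc2 x hx, ← Finset.powerset_univ]
    refine Finset.sum_congr rfl fun S _ => ?_
    rw [mul_comm, hc1 S x (fun _ => 0) (fun i hi => absurd (Finset.mem_univ i) hi)]
end

section
/- If a function f : X^n → Y is both Π-decomposable and Π'-decomposable, then Π and Π' agree on X × R_f, where R_f = {(f(x_k^1), f(x_k^0)) : x ∈ X^n, k ∈ [n]}. -/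
theorem pivotal_function_unique {X Y : Type*} [Nonempty X] [Nonempty Y]
    (zero one : X) (n : ℕ) (f : (Fin n → X) → Y) (P P' : X → Y → Y → Y)
    (hP : ∀ (x : Fin n → X) (k : Fin n),
      f x = P (x k) (f (Function.update x k one)) (f (Function.update x k zero)))
    (hP' : ∀ (x : Fin n → X) (k : Fin n),
      f x = P' (x k) (f (Function.update x k one)) (f (Function.update x k zero)))
    (p : X) (u v : Y)
    (huv : ∃ (x : Fin n → X) (k : Fin n),
      u = f (Function.update x k one) ∧ v = f (Function.update x k zero)) :
    P p u v = P' p u v := by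
  obtain ⟨x, k, hu, hv⟩ := huv
  have h1 := hP (Function.update x k p) k
  have h2 := hP' (Function.update x k p) k
  simp only [Function.update_self, Function.update_idem] at h1 h2
  rw [hu, hv, ← h1, ← h2]
end

section
/- If two Π-decomposable functions f, g : X^n → Y agree on {0,1}^n, then f = g on all of X^n. -/
theorem pivotal_determined_by_01 {X Y : Type*} [Nonempty X] [Nonempty Y]
    (zero one : X) (n : ℕ) (f g : (Fin n → X) → Y) (P : X → Y → Y → Y)
    (hf : ∀ (x : Fin n → X) (k : Fin n),
      f x = P (x k) (f (Function.update x k one)) (f (Function.update x k zero)))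
    (hg : ∀ (x : Fin n → X) (k : Fin n),
      g x = P (x k) (g (Function.update x k one)) (g (Function.update x k zero)))
    (h01 : ∀ x : Fin n → X, (∀ i, x i = zero ∨ x i = one) → f x = g x) :
    ∀ x : Fin n → X, f x = g x := by
  classical
  have key : ∀ (m : ℕ) (x : Fin n → X),
      (Finset.univ.filter (fun i => ¬(x i = zero ∨ x i = one))).card = m → f x = g x := by
    intro m
    induction m using Nat.strong_induction_on with
    | _ m ih =>
      intro x hm
      by_cases hall : ∀ i, x i = zero ∨ x i = one
      · exact h01 x hall
      · push_neg at hall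
        obtain ⟨k, hk⟩ := hall
        have hkmem : k ∈ Finset.univ.filter (fun i => ¬(x i = zero ∨ x i = one)) := by
          simp only [Finset.mem_filter, Finset.mem_univ, true_and]
          tauto
        have hsub : ∀ a : X, (a = zero ∨ a = one) →
            (Finset.univ.filter (fun i => ¬(Function.update x k a i = zero ∨
              Function.update x k a i = one))).card < m := by
          intro a ha
          have : (Finset.univ.filter (fun i => ¬(Function.update x k a i = zero ∨
              Function.update x k a i = one))) ⊆
              (Finset.univ.filter (fun i => ¬(x i = zero ∨ x i = one))).erase k := by
            intro i hi
            simp only [Finset.mem_filter, Finset.mem_univ, true_and] at hi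
            by_cases hik : i = k
            · subst hik
              simp [Function.update_self] at hi
              tauto
            · rw [Finset.mem_erase]
              refine ⟨hik, ?_⟩
              simp only [Finset.mem_filter, Finset.mem_univ, true_and]
              rwa [Function.update_of_ne hik] at hi
          calc _ ≤ ((Finset.univ.filter (fun i => ¬(x i = zero ∨ x i = one))).erase k).card :=
                Finset.card_le_card this
            _ < (Finset.univ.filter (fun i => ¬(x i = zero ∨ x i = one))).card :=
                Finset.card_erase_lt_of_mem hkmem
            _ = m := hm
        have h1 := ih _ (hsub one (Or.inr rfl)) (Function.update x k one) rfl
        have h0 := ih _ (hsub zero (Or.inl rfl)) (Function.update x k zero) rfl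
        rw [hf x k, hg x k, h1, h0]
  intro x
  exact key _ x rfl
end

section
/- Every lattice polynomial function f on a bounded distributive lattice X satisfies the median decomposition: f(x) = med(x_k, f(x_k^1), f(x_k^0)) for all x ∈ X^n and k ∈ [n], where med(p,u,v) = (p∧u) ∨ (u∧v) ∨ (v∧p). -/
inductive IsLatticePolynomial {X : Type*} [Lattice X] {n : ℕ} :
    ((Fin n → X) → X) → Prop
  | proj (k : Fin n) : IsLatticePolynomial (fun x => x k)
  | const (c : X) : IsLatticePolynomial (fun _ => c)
  | inf {f g} : IsLatticePolynomial f → IsLatticePolynomial g →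
      IsLatticePolynomial (fun x => f x ⊓ g x)
  | sup {f g} : IsLatticePolynomial f → IsLatticePolynomial g →
      IsLatticePolynomial (fun x => f x ⊔ g x)

lemma latticePolynomial_monotone {X : Type*} [Lattice X] {n : ℕ}
    {f : (Fin n → X) → X} (hf : IsLatticePolynomial f) : Monotone f := by
  induction hf with
  | proj k => exact fun a b h => h k
  | const c => exact monotone_const
  | inf h1 h2 ih1 ih2 => exact fun a b h => inf_le_inf (ih1 h) (ih2 h)
  | sup h1 h2 ih1 ih2 => exact fun a b h => sup_le_sup (ih1 h) (ih2 h)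

lemma update_bot_le_update_top {X : Type*} [Lattice X] [BoundedOrder X] {n : ℕ}
    (x : Fin n → X) (k : Fin n) :
    Function.update x k ⊥ ≤ Function.update x k ⊤ := by
  intro i
  rcases eq_or_ne i k with h | h
  · subst h; simp
  · simp [Function.update_of_ne h]

lemma latticePolynomial_pivot {X : Type*} [DistribLattice X]
    [BoundedOrder X] {n : ℕ} {f : (Fin n → X) → X} (hf : IsLatticePolynomial f)
    (x : Fin n → X) (k : Fin n) :
    f x = (x k ⊓ f (Function.update x k ⊤)) ⊔ f (Function.update x k ⊥) := by
  induction hf with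
  | proj j =>
    by_cases h : j = k
    · subst h; simp
    · simp [Function.update_of_ne h, inf_sup_self]
  | const c => simp
  | @inf F G h1 h2 ih1 ih2 =>
    have hF : F (Function.update x k ⊥) ≤ F (Function.update x k ⊤) :=
      latticePolynomial_monotone h1 (update_bot_le_update_top x k)
    have hG : G (Function.update x k ⊥) ≤ G (Function.update x k ⊤) :=
      latticePolynomial_monotone h2 (update_bot_le_update_top x k)
    show F x ⊓ G x = x k ⊓ (F _ ⊓ G _) ⊔ (F _ ⊓ G _)
    rw [ih1, ih2]
    set p := x k
    set a := F (Function.update x k ⊤)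
    set b := F (Function.update x k ⊥)
    set c := G (Function.update x k ⊤)
    set d := G (Function.update x k ⊥)
    have expand : (p ⊓ a ⊔ b) ⊓ (p ⊓ c ⊔ d) =
        (p ⊓ a ⊓ (p ⊓ c)) ⊔ (p ⊓ a ⊓ d) ⊔ (b ⊓ (p ⊓ c)) ⊔ (b ⊓ d) := by
      rw [inf_sup_left, inf_sup_right, inf_sup_right]
      ac_rfl
    rw [expand]
    have e1 : p ⊓ a ⊓ (p ⊓ c) = p ⊓ (a ⊓ c) := by
      rw [inf_inf_distrib_left]; ac_rfl
    rw [e1]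
    apply le_antisymm
    · have t2 : p ⊓ a ⊓ d ≤ p ⊓ (a ⊓ c) := by
        rw [inf_assoc]; exact inf_le_inf_left _ (inf_le_inf_left _ hG)
      have t3 : b ⊓ (p ⊓ c) ≤ p ⊓ (a ⊓ c) :=
        le_inf (inf_le_right.trans inf_le_left)
          (le_inf (inf_le_left.trans hF) (inf_le_right.trans inf_le_right))
      exact sup_le (sup_le (sup_le le_sup_left (le_sup_of_le_left t2))
        (le_sup_of_le_left t3)) le_sup_right
    · exact sup_le (le_sup_of_le_left (le_sup_of_le_left le_sup_left)) le_sup_right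
  | @sup F G h1 h2 ih1 ih2 =>
    show F x ⊔ G x = x k ⊓ (F _ ⊔ G _) ⊔ (F _ ⊔ G _)
    rw [ih1, ih2, inf_sup_left]
    ac_rfl

theorem lattice_polynomial_median_decomposition {X : Type*} [DistribLattice X]
    [BoundedOrder X] {n : ℕ} (f : (Fin n → X) → X) (hf : IsLatticePolynomial f)
    (x : Fin n → X) (k : Fin n) :
    f x = (x k ⊓ f (Function.update x k ⊤)) ⊔
          (f (Function.update x k ⊤) ⊓ f (Function.update x k ⊥)) ⊔
          (f (Function.update x k ⊥) ⊓ x k) := by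
  have hM : f (Function.update x k ⊥) ≤ f (Function.update x k ⊤) :=
    latticePolynomial_monotone hf (update_bot_le_update_top x k)
  rw [latticePolynomial_pivot hf x k, inf_eq_right.mpr hM, sup_assoc,
    sup_eq_left.mpr (inf_le_left :
      f (Function.update x k ⊥) ⊓ x k ≤ f (Function.update x k ⊥))]
end

section
/- If a function f : X^n → X on a bounded distributive lattice X satisfies f(x) = med(x_k, f(x_k^1), f(x_k^0)) for all x ∈ X^n and all k ∈ [n], then f can be written in disjunctive normal form: f(x) = ⋁_{S ⊆ [n]} ( f(1_S) ∧ ⋀_{i∈S} x_i ), where 1_S is the tuple with i-th coordinate 1 if i ∈ S and 0 otherwise. -/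
theorem median_decomposable_dnf {X : Type*} [DistribLattice X] [BoundedOrder X]
    {n : ℕ} (f : (Fin n → X) → X)
    (hf : ∀ (x : Fin n → X) (k : Fin n),
      f x = (x k ⊓ f (Function.update x k ⊤)) ⊔
            (f (Function.update x k ⊤) ⊓ f (Function.update x k ⊥)) ⊔
            (f (Function.update x k ⊥) ⊓ x k)) :
    ∀ x : Fin n → X,
      f x = (Finset.univ : Finset (Finset (Fin n))).sup
        (fun S => f (fun i => if i ∈ S then (⊤ : X) else ⊥) ⊓ S.inf x) := by
  -- monotonicity in each coordinate
  have mono : ∀ (x : Fin n → X) (k : Fin n),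
      f (Function.update x k ⊥) ≤ f (Function.update x k ⊤) := by
    intro x k
    have h := hf (Function.update x k ⊥) k
    rw [Function.update_idem, Function.update_idem, Function.update_self] at h
    simp only [bot_inf_eq, inf_bot_eq, bot_sup_eq, sup_bot_eq] at h
    rw [h]
    exact inf_le_left
  have key : ∀ (T : Finset (Fin n)) (x : Fin n → X),
      f x = T.powerset.sup
        (fun S => f (fun i => if i ∈ S then (⊤ : X) else if i ∈ T then ⊥ else x i)
          ⊓ S.inf x) := by
    intro T
    induction T using Finset.induction_on with
    | empty => intro x; simp
    | @insert k T hk ih =>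
      intro x
      -- expansion of f (update x k ⊤)
      have hTop : f (Function.update x k ⊤) = T.powerset.sup
          (fun S => f (fun i => if i ∈ insert k S then (⊤ : X) else
              if i ∈ insert k T then ⊥ else x i) ⊓ S.inf x) := by
        rw [ih (Function.update x k ⊤)]
        apply Finset.sup_congr rfl
        intro S hS
        rw [Finset.mem_powerset] at hS
        have hkS : k ∉ S := fun h => hk (hS h)
        congr 1
        · congr 1
          funext i
          by_cases hik : i = k
          · subst hik
            simp [hkS, hk, Function.update_self]
          · simp only [Finset.mem_insert, hik, false_or, Function.update_of_ne hik]
        · exact Finset.inf_congr rfl fun i hi =>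
            Function.update_of_ne (fun h => hkS (by rw [← h]; exact hi)) _ _
      -- expansion of f (update x k ⊥)
      have hBot : f (Function.update x k ⊥) = T.powerset.sup
          (fun S => f (fun i => if i ∈ S then (⊤ : X) else
              if i ∈ insert k T then ⊥ else x i) ⊓ S.inf x) := by
        rw [ih (Function.update x k ⊥)]
        apply Finset.sup_congr rfl
        intro S hS
        rw [Finset.mem_powerset] at hS
        have hkS : k ∉ S := fun h => hk (hS h)
        congr 1
        · congr 1
          funext i
          by_cases hik : i = k
          · subst hik
            simp [hkS, hk, Function.update_self]
          · simp only [Finset.mem_insert, hik, false_or, Function.update_of_ne hik]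
        · exact Finset.inf_congr rfl fun i hi =>
            Function.update_of_ne (fun h => hkS (by rw [← h]; exact hi)) _ _
      -- median reduces since f(⊥-update) ≤ f(⊤-update)
      have hmed : f x = (x k ⊓ f (Function.update x k ⊤)) ⊔ f (Function.update x k ⊥) := by
        rw [hf x k, inf_eq_right.mpr (mono x k), sup_assoc]
        congr 1
        rw [sup_inf_self]
      rw [hmed, sup_comm, Finset.powerset_insert, Finset.sup_union, Finset.sup_image]
      congr 1
      · rw [hTop, Finset.sup_inf_distrib_left]
        apply Finset.sup_congr rfl
        intro S hS
        rw [Finset.mem_powerset] at hS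
        have hkS : k ∉ S := fun h => hk (hS h)
        simp only [Function.comp_apply, Finset.inf_insert]
        try rw [← inf_assoc, inf_comm (x k), inf_assoc]
  intro x
  rw [key Finset.univ x, ← Finset.powerset_univ]
  apply Finset.sup_congr rfl
  intro S _
  congr 1
  congr 1
  funext i
  simp
end
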